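/- (Rescaled limit of anti-de Sitter isometries is a Minkowski isometry.) Let h, k : ℝ → SL₂(ℝ) be paths, differentiable at 0 as maps into M₂(ℝ), with h(0) = k(0), and let u := (d/dt)|_{t=0} (k(t)·h(t)⁻¹) ∈ M₂(ℝ) (a trace-zero matrix). Then, as t → 0⁺, the linear endomorphisms of M₂(ℝ) given by M ↦ r̂_t(k(t) · r̂_t⁻¹(M) · h(t)⁻¹) converge (in any norm on the space of linear endomorphisms of M₂(ℝ)) to the linear endomorphism M ↦ h(0)·(M − (tr M/2)·I)·h(0)⁻¹ + (tr M/2)·(I + u). -/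

import Mathlib

/-!
Write `M = N + c·I` with `tr N = 0` and `c = tr M / 2`. Then
`k(t) r̂_t⁻¹(M) h(t)⁻¹ = t·k(t) N h(t)⁻¹ + c·f(t)` with `f = k h⁻¹`, and `r̂_t` maps the first
term to `k(t) N h(t)⁻¹` plus a trace part of size `O(t)`, while
`r̂_t(f(t)) = P(t⁻¹(f(t) − I)) + (tr f(t) / 2)·I`, `P` the projection to trace-free matrices.
As `f` is a curve in `SL₂(ℝ)` through `I` and `det(I + tA) = 1 + t·tr A + t²·det A`, its velocity
`u` is trace-free, so `r̂_t(f(t)) → I + u`.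
On the finite-dimensional space `M₂(ℝ)`, operator convergence is pointwise convergence.
-/

noncomputable section

attribute [local instance] Matrix.normedAddCommGroup Matrix.normedSpace

/-- The space `M₂(ℝ)` of 2×2 real matrices. -/
abbrev M2 : Type := Matrix (Fin 2) (Fin 2) ℝ

/-- The linear map `M ↦ (tr M / 2) · I` on `M₂(ℝ)`. -/
def trHalf : M2 →ₗ[ℝ] M2 :=
  LinearMap.smulRight ((1 / 2 : ℝ) • Matrix.traceLinearMap (Fin 2) ℝ ℝ) (1 : M2)

/-- The projective rescaling `r̂_t(M) = t⁻¹·(M − (tr M/2)·I) + (tr M/2)·I` as a linear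
endomorphism of `M₂(ℝ)`. -/
def rhat (t : ℝ) : M2 →ₗ[ℝ] M2 := t⁻¹ • (LinearMap.id - trHalf) + trHalf

/-- The inverse rescaling `r̂_t⁻¹(M) = t·(M − (tr M/2)·I) + (tr M/2)·I`. -/
def rhatInv (t : ℝ) : M2 →ₗ[ℝ] M2 := t • (LinearMap.id - trHalf) + trHalf

/-- The linear map `M ↦ a · M · b` on `M₂(ℝ)`. -/
def conjMap (a b : M2) : M2 →ₗ[ℝ] M2 :=
  (LinearMap.mulLeft ℝ a).comp (LinearMap.mulRight ℝ b)

open Filter Topology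

theorem ContinuousAt.matrix_mul {X n R : Type*} [TopologicalSpace X] [Fintype n]
    [TopologicalSpace R] [NonUnitalNonAssocSemiring R] [IsTopologicalSemiring R]
    {a b : X → Matrix n n R} {x : X} (ha : ContinuousAt a x) (hb : ContinuousAt b x) :
    ContinuousAt (fun y => a y * b y) x :=
  (continuous_fst.matrix_mul continuous_snd).continuousAt.comp₂ ha hb

theorem DifferentiableAt.matrix_mul {𝕜 E n : Type*} [NontriviallyNormedField 𝕜]
    [CompleteSpace 𝕜] [NormedAddCommGroup E] [NormedSpace 𝕜 E] [Fintype n] [DecidableEq n]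
    {a b : E → Matrix n n 𝕜} {x : E} (ha : DifferentiableAt 𝕜 a x)
    (hb : DifferentiableAt 𝕜 b x) : DifferentiableAt 𝕜 (fun y => a y * b y) x := by
  let mulCLM : Matrix n n 𝕜 →L[𝕜] Matrix n n 𝕜 →L[𝕜] Matrix n n 𝕜 :=
    LinearMap.toContinuousLinearMap
      (LinearMap.toContinuousLinearMap.toLinearMap ∘ₗ LinearMap.mul 𝕜 (Matrix n n 𝕜))
  exact (mulCLM.isBoundedBilinearMap.differentiableAt (a x, b x)).comp x (ha.prodMk hb)

theorem tendsto_clm_of_tendsto_apply {𝕜 X E F : Type*} [NontriviallyNormedField 𝕜]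
    [CompleteSpace 𝕜] [NormedAddCommGroup E] [NormedSpace 𝕜 E] [FiniteDimensional 𝕜 E]
    [NormedAddCommGroup F] [NormedSpace 𝕜 F] {f : X → E →L[𝕜] F} {l : Filter X}
    {g : E →L[𝕜] F} (h : ∀ y, Tendsto (fun x => f x y) l (𝓝 (g y))) :
    Tendsto f l (𝓝 g) := by
  let e : (E →L[𝕜] F) ≃L[𝕜] Fin (Module.finrank 𝕜 E) → F :=
    ((ContinuousLinearEquiv.ofFinrankEq (Module.finrank_fin_fun 𝕜).symm).arrowCongr
      (1 : F ≃L[𝕜] F)).trans (ContinuousLinearEquiv.piRing _)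
  rw [e.toHomeomorph.isInducing.tendsto_nhds_iff]
  exact tendsto_pi_nhds.mpr fun i => h _

namespace Matrix

theorem inv_eq_trace_smul_one_sub {R : Type*} [CommRing R] {A : Matrix (Fin 2) (Fin 2) R}
    (hA : A.det = 1) : A⁻¹ = A.trace • 1 - A := by
  rw [inv_def, hA, Ring.inverse_one, one_smul, adjugate_fin_two]
  ext i j
  fin_cases i <;> fin_cases j <;> simp [trace_fin_two]

theorem det_one_add_smul_fin_two {R : Type*} [CommRing R] (t : R)
    (A : Matrix (Fin 2) (Fin 2) R) :
    (1 + t • A).det = 1 + t * A.trace + t ^ 2 * A.det := by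
  simp [det_fin_two, trace_fin_two]
  ring

end Matrix

theorem HasDerivAt.tendsto_inv_smul_sub {E : Type*} [NormedAddCommGroup E] [NormedSpace ℝ E]
    {f : ℝ → E} {a u : E} (hf : HasDerivAt f u 0) (hf0 : f 0 = a) :
    Tendsto (fun t => t⁻¹ • (f t - a)) (𝓝[≠] 0) (𝓝 u) := by
  simpa only [zero_add, hf0] using hf.tendsto_slope_zero

theorem trace_eq_zero_of_hasDerivAt_of_det_eq_one {f : ℝ → Matrix (Fin 2) (Fin 2) ℝ}
    {u : Matrix (Fin 2) (Fin 2) ℝ}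
    (hf : HasDerivAt f u 0) (hf0 : f 0 = 1) (hdet : ∀ t, (f t).det = 1) : u.trace = 0 := by
  set s : ℝ → Matrix (Fin 2) (Fin 2) ℝ := fun t => t⁻¹ • (f t - 1)
  have hs : Tendsto s (𝓝[≠] 0) (𝓝 u) := hf.tendsto_inv_smul_sub hf0
  have hkey : ∀ t ≠ 0, (s t).trace + t * (s t).det = 0 := by
    intro t ht
    have hft : f t = 1 + t • s t := by simp [s, smul_smul, mul_inv_cancel₀ ht]
    have hexp := Matrix.det_one_add_smul_fin_two t (s t)
    rw [← hft, hdet] at hexp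
    have : t * ((s t).trace + t * (s t).det) = 0 := by linear_combination -hexp
    exact (mul_eq_zero.mp this).resolve_left ht
  have hlim : Tendsto (fun t => (s t).trace + t * (s t).det) (𝓝[≠] 0)
      (𝓝 (u.trace + 0 * u.det)) :=
    ((continuous_id.matrix_trace.tendsto u).comp hs).add
      ((tendsto_nhdsWithin_of_tendsto_nhds tendsto_id).mul
        ((continuous_id.matrix_det.tendsto u).comp hs))
  have hzero : Tendsto (fun t => (s t).trace + t * (s t).det) (𝓝[≠] 0) (𝓝 0) :=
    tendsto_const_nhds.congr' (eventually_nhdsWithin_of_forall fun t ht => (hkey t ht).symm)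
  simpa using tendsto_nhds_unique hlim hzero

theorem trHalf_apply (M : M2) : trHalf M = (M.trace / 2) • 1 := by
  simp [trHalf, div_eq_inv_mul]

theorem trHalf_one : trHalf 1 = 1 := by
  simp [trHalf_apply]

theorem trHalf_eq_zero {M : M2} (hM : M.trace = 0) : trHalf M = 0 := by
  simp [trHalf_apply, hM]

theorem trace_sub_trHalf (M : M2) : (M - trHalf M).trace = 0 := by
  simp [trHalf_apply]

theorem rhat_apply (t : ℝ) (M : M2) : rhat t M = t⁻¹ • (M - trHalf M) + trHalf M := rfl

theorem rhatInv_apply (t : ℝ) (M : M2) : rhatInv t M = t • (M - trHalf M) + trHalf M := rfl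

theorem rhat_smul_self {t : ℝ} (ht : t ≠ 0) (X : M2) :
    rhat t (t • X) = X - trHalf X + t • trHalf X := by
  rw [rhat_apply, map_smul, ← smul_sub, smul_smul, inv_mul_cancel₀ ht, one_smul]

theorem tendsto_rhat_of_hasDerivAt {f : ℝ → M2} {u : M2} (hf : HasDerivAt f u 0)
    (hf0 : f 0 = 1) (hu : u.trace = 0) :
    Tendsto (fun t => rhat t (f t)) (𝓝[≠] 0) (𝓝 (1 + u)) := by
  set s : ℝ → M2 := fun t => t⁻¹ • (f t - 1)
  have hs : Tendsto s (𝓝[≠] 0) (𝓝 u) := hf.tendsto_inv_smul_sub hf0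
  have hrhat : ∀ t, rhat t (f t) = s t - trHalf (s t) + trHalf (f t) := by
    intro t
    simp only [rhat_apply, s, map_smul, map_sub, trHalf_one, smul_sub]
    abel
  have hQ : Continuous trHalf := trHalf.continuous_of_finiteDimensional
  have hlim := (hs.sub ((hQ.tendsto u).comp hs)).add
    ((hQ.tendsto (f 0)).comp (hf.continuousAt.tendsto.mono_left nhdsWithin_le_nhds))
  rw [trHalf_eq_zero hu, hf0, trHalf_one, sub_zero, add_comm] at hlim
  exact hlim.congr fun t => (hrhat t).symm

theorem rhat_mul_rhatInv_mul {t : ℝ} (ht : t ≠ 0) (a b M : M2) :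
    rhat t (a * rhatInv t M * b) =
      a * (M - trHalf M) * b - trHalf (a * (M - trHalf M) * b) +
        t • trHalf (a * (M - trHalf M) * b) + (M.trace / 2) • rhat t (a * b) := by
  rw [← rhat_smul_self ht, ← map_smul, ← map_add, rhatInv_apply, trHalf_apply M]
  congr 1
  simp only [Matrix.mul_add, Matrix.add_mul, Matrix.mul_smul, Matrix.smul_mul, Matrix.mul_one]

theorem tendsto_rhat_mul_rhatInv_mul {a b : ℝ → M2} {u : M2} (ha : ContinuousAt a 0)
    (hb : ContinuousAt b 0) (hab0 : a 0 * b 0 = 1)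
    (hab : HasDerivAt (fun t => a t * b t) u 0) (hu : u.trace = 0) (M : M2) :
    Tendsto (fun t => rhat t (a t * rhatInv t M * b t)) (𝓝[≠] 0)
      (𝓝 (a 0 * (M - trHalf M) * b 0 + (M.trace / 2) • (1 + u))) := by
  set X : ℝ → M2 := fun t => a t * (M - trHalf M) * b t
  have hX : ContinuousAt X 0 := (ha.matrix_mul continuousAt_const).matrix_mul hb
  have hX0 : trHalf (X 0) = 0 := by
    refine trHalf_eq_zero ?_
    rw [Matrix.trace_mul_comm, ← Matrix.mul_assoc, mul_eq_one_comm.mp hab0, Matrix.one_mul,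
      trace_sub_trHalf]
  have hQ : Continuous trHalf := trHalf.continuous_of_finiteDimensional
  have hXt : Tendsto X (𝓝[≠] 0) (𝓝 (X 0)) := hX.tendsto.mono_left nhdsWithin_le_nhds
  have hlim := ((hXt.sub ((hQ.tendsto _).comp hXt)).add
    ((tendsto_nhdsWithin_of_tendsto_nhds tendsto_id).smul ((hQ.tendsto _).comp hXt))).add
    ((tendsto_rhat_of_hasDerivAt hab hab0 hu).const_smul (M.trace / 2))
  rw [hX0, sub_zero, zero_smul, add_zero] at hlim
  refine hlim.congr' (eventually_nhdsWithin_of_forall fun t ht => ?_)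
  exact (rhat_mul_rhatInv_mul ht (a t) (b t) M).symm

/-- Proposition 7.1.(2), rescaled limit of anti-de Sitter isometries: if
`h, k : ℝ → SL₂(ℝ)` are differentiable at `0` with `h(0) = k(0)` and
`u = (d/dt)|₀ (k·h⁻¹)`, then the rescaled conjugated maps
`M ↦ r̂_t(k(t)·r̂_t⁻¹(M)·h(t)⁻¹)` converge in norm, as `t → 0⁺`, to
`M ↦ h(0)·(M − (tr M/2)·I)·h(0)⁻¹ + (tr M/2)·(I + u)`. -/
theorem statement19 (h k : ℝ → M2)
    (hdet : ∀ t, (h t).det = 1) (kdet : ∀ t, (k t).det = 1)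
    (hdiff : DifferentiableAt ℝ h 0) (kdiff : DifferentiableAt ℝ k 0)
    (h0k0 : h 0 = k 0)
    (u : M2) (hu : u = deriv (fun t => k t * (h t)⁻¹) 0) :
    Filter.Tendsto
      (fun t : ℝ => LinearMap.toContinuousLinearMap
        ((rhat t).comp ((conjMap (k t) (h t)⁻¹).comp (rhatInv t))))
      (nhdsWithin 0 (Set.Ioi 0))
      (nhds (LinearMap.toContinuousLinearMap
        ((conjMap (h 0) (h 0)⁻¹).comp (LinearMap.id - trHalf) +
          LinearMap.smulRight ((1 / 2 : ℝ) • Matrix.traceLinearMap (Fin 2) ℝ ℝ) (1 + u)))) := by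
  have hinv : (fun t => (h t)⁻¹) = fun t => (h t).trace • (1 : M2) - h t :=
    funext fun t => Matrix.inv_eq_trace_smul_one_sub (hdet t)
  have hinv_diff : DifferentiableAt ℝ (fun t => (h t)⁻¹) 0 := by
    rw [hinv]
    exact (((Matrix.traceLinearMap (Fin 2) ℝ ℝ).toContinuousLinearMap.differentiableAt.comp 0
      hdiff).smul_const 1).sub hdiff
  have hf : HasDerivAt (fun t => k t * (h t)⁻¹) u 0 :=
    hu ▸ (kdiff.matrix_mul hinv_diff).hasDerivAt
  have hf0 : k 0 * (h 0)⁻¹ = 1 := by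
    rw [← h0k0, Matrix.mul_nonsing_inv _ (by simp [hdet])]
  have htr : u.trace = 0 :=
    trace_eq_zero_of_hasDerivAt_of_det_eq_one hf hf0 fun t => by
      simp [Matrix.det_nonsing_inv, hdet, kdet]
  refine tendsto_clm_of_tendsto_apply fun M => ?_
  have hlim := (tendsto_rhat_mul_rhatInv_mul kdiff.continuousAt
    hinv_diff.continuousAt hf0 hf htr M).mono_left (nhdsGT_le_nhdsNE 0)
  rw [← h0k0] at hlim
  convert hlim using 2 with t
  · change rhat t (k t * (rhatInv t M * (h t)⁻¹)) = _
    rw [Matrix.mul_assoc]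
  · -- the `Matrix` topology on `M2` and the one of the local norm agree definitionally
    rfl
  · change h 0 * ((M - trHalf M) * (h 0)⁻¹) + ((1 / 2 : ℝ) * M.trace) • (1 + u) = _
    rw [Matrix.mul_assoc, one_div_mul_eq_div]
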